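/- Let μ > 0, γ > 0, g > 0 with 2γg > 1, and let v ∈ ℝ², v ≠ 0. Define χ_γ(v) = g if γ|v| ≥ g + 1/(2γ); χ_γ(v) = g − (γ/2)(g − γ|v| + 1/(2γ))² if |γ|v| − g| ≤ 1/(2γ); and χ_γ(v) = γ|v| if γ|v| ≤ g − 1/(2γ). Define the 2×2 matrix M = 2μ I + (χ_γ(v)/|v|) I − (χ_γ(v)/|v|³) v vᵀ + 1_S · (γ²/|v|²)(g − γ|v| + 1/(2γ)) v vᵀ + 1_I · (γ/|v|²) v vᵀ, where 1_S = 1 if |γ|v| − g| < 1/(2γ) and 0 otherwise, and 1_I = 1 if γ|v| ≤ g − 1/(2γ) and 0 otherwise. Then M is symmetric and positive definite. -/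

import Mathlib

/-!
With `P = v vᵀ` and `r = |v|`, the matrix is
`M = 2μ I + (χ_γ(v)/r³) (r² I - P) + (nonnegative scalar) • P`.
The first summand is positive definite, `r² I - P` is positive semidefinite by Cauchy–Schwarz,
`P` is positive semidefinite, and `χ_γ ≥ 0` because on the smoothing band the quadratic
correction is at most `1/(2γ) < g`.
-/

/-- The function `χ_γ` from the proof of Proposition 3.2 of the paper. -/
noncomputable def chiReg (γ g : ℝ) (v : EuclideanSpace ℝ (Fin 2)) : ℝ :=
  if g + 1 / (2 * γ) ≤ γ * ‖v‖ then g
  else if |γ * ‖v‖ - g| ≤ 1 / (2 * γ) then g - γ / 2 * (g - γ * ‖v‖ + 1 / (2 * γ)) ^ 2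
  else γ * ‖v‖

/-- The coefficient matrix M of the linearized equation (3.17) of the paper. -/
noncomputable def Mmat (μ γ g : ℝ) (v : EuclideanSpace ℝ (Fin 2)) :
    Matrix (Fin 2) (Fin 2) ℝ :=
  (2 * μ) • (1 : Matrix (Fin 2) (Fin 2) ℝ)
    + (chiReg γ g v / ‖v‖) • (1 : Matrix (Fin 2) (Fin 2) ℝ)
    - (chiReg γ g v / ‖v‖ ^ 3) • Matrix.of (fun i j => v i * v j)
    + (if |γ * ‖v‖ - g| < 1 / (2 * γ) then (1 : ℝ) else 0) •
        (γ ^ 2 / ‖v‖ ^ 2 * (g - γ * ‖v‖ + 1 / (2 * γ))) • Matrix.of (fun i j => v i * v j)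
    + (if γ * ‖v‖ ≤ g - 1 / (2 * γ) then (1 : ℝ) else 0) •
        (γ / ‖v‖ ^ 2) • Matrix.of (fun i j => v i * v j)

open Matrix

theorem Matrix.posSemidef_norm_sq_smul_one_sub_vecMulVec {n : Type*} [Fintype n] [DecidableEq n]
    (v : EuclideanSpace ℝ n) :
    (‖v‖ ^ 2 • (1 : Matrix n n ℝ) - vecMulVec v.ofLp v.ofLp).PosSemidef := by
  refine posSemidef_iff_dotProduct_mulVec.mpr ⟨?_, fun x => ?_⟩
  · exact (isHermitian_one.smul (.all _)).sub
      (by simpa using (posSemidef_vecMulVec_self_star v.ofLp).isHermitian)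
  · have cauchy_schwarz := Finset.sum_mul_sq_le_sq_mul_sq Finset.univ v.ofLp x
    rw [← EuclideanSpace.real_norm_sq_eq] at cauchy_schwarz
    simp only [sub_mulVec, smul_mulVec, one_mulVec, vecMulVec_mulVec, dotProduct_sub,
      dotProduct_smul, star_trivial, MulOpposite.smul_eq_mul_unop, MulOpposite.unop_op,
      smul_eq_mul, dotProduct_comm x v.ofLp]
    simp only [dotProduct, ← sq] at *
    linarith

theorem Matrix.PosSemidef.ite_smul {n R : Type*} [Fintype n] [CommRing R] [PartialOrder R]
    [StarRing R] {p : Prop} [Decidable p] {A : Matrix n n R} (hA : p → A.PosSemidef) :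
    ((if p then (1 : R) else 0) • A).PosSemidef := by
  split_ifs with h
  · simpa using hA h
  · simpa using PosSemidef.zero

theorem chiReg_nonneg {γ g : ℝ} (hγ : 0 < γ) (hγg : 1 < 2 * γ * g)
    (v : EuclideanSpace ℝ (Fin 2)) : 0 ≤ chiReg γ g v := by
  have hγδ : γ * (1 / (2 * γ)) = 1 / 2 := by field_simp
  set δ := 1 / (2 * γ)
  have hδg : δ < g := lt_of_mul_lt_mul_left (by linarith) hγ.le
  unfold chiReg
  split_ifs with h_sat h_smooth
  · linarith [show 0 < δ by positivity]
  · obtain ⟨h_lo, h_hi⟩ := abs_le.mp h_smooth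
    set t := g - γ * ‖v‖ + δ
    have : γ / 2 * t ^ 2 ≤ δ := by nlinarith
    linarith
  · positivity

theorem Mmat_eq_add {μ γ g : ℝ} {v : EuclideanSpace ℝ (Fin 2)} (hv : v ≠ 0) :
    Mmat μ γ g v = (2 * μ) • (1 : Matrix (Fin 2) (Fin 2) ℝ)
      + (chiReg γ g v / ‖v‖ ^ 3) • (‖v‖ ^ 2 • 1 - vecMulVec v.ofLp v.ofLp)
      + (if |γ * ‖v‖ - g| < 1 / (2 * γ) then (1 : ℝ) else 0) •
          (γ ^ 2 / ‖v‖ ^ 2 * (g - γ * ‖v‖ + 1 / (2 * γ))) • vecMulVec v.ofLp v.ofLp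
      + (if γ * ‖v‖ ≤ g - 1 / (2 * γ) then (1 : ℝ) else 0) •
          (γ / ‖v‖ ^ 2) • vecMulVec v.ofLp v.ofLp := by
  have h_coeff : chiReg γ g v / ‖v‖ = chiReg γ g v / ‖v‖ ^ 3 * ‖v‖ ^ 2 := by
    field_simp [norm_ne_zero_iff.mpr hv]
  rw [Mmat, h_coeff, vecMulVec]
  module

theorem Mmat_isSymm_posDef_general (μ γ g : ℝ) (hμ : 0 < μ) (hγ : 0 < γ)
    (hγg : 1 < 2 * γ * g) (v : EuclideanSpace ℝ (Fin 2)) (hv : v ≠ 0) :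
    (Mmat μ γ g v).IsSymm ∧ (Mmat μ γ g v).PosDef := by
  have h_rank_one : (vecMulVec v.ofLp v.ofLp).PosSemidef := by
    simpa using posSemidef_vecMulVec_self_star v.ofLp
  have h_posDef : (Mmat μ γ g v).PosDef := by
    rw [Mmat_eq_add hv]
    refine (((PosDef.one.smul (by positivity)).add_posSemidef ?_).add_posSemidef ?_)
      |>.add_posSemidef ?_
    · exact (posSemidef_norm_sq_smul_one_sub_vecMulVec v).smul
        (div_nonneg (chiReg_nonneg hγ hγg v) (by positivity))
    · refine PosSemidef.ite_smul fun h_smooth => h_rank_one.smul ?_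
      have : 0 < g - γ * ‖v‖ + 1 / (2 * γ) := by linarith [(abs_lt.mp h_smooth).2]
      positivity
    · exact PosSemidef.ite_smul fun _ => h_rank_one.smul (by positivity)
  exact ⟨isHermitian_iff_isSymm.mp h_posDef.isHermitian, h_posDef⟩

/-- The matrix M of (3.17) is symmetric and positive definite. -/
theorem Mmat_isSymm_posDef (μ γ g : ℝ) (hμ : 0 < μ) (hγ : 0 < γ) (hg : 0 < g)
    (hγg : 1 < 2 * γ * g) (v : EuclideanSpace ℝ (Fin 2)) (hv : v ≠ 0) :
    (Mmat μ γ g v).IsSymm ∧ (Mmat μ γ g v).PosDef :=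
  Mmat_isSymm_posDef_general μ γ g hμ hγ hγg v hv
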